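/- arXiv:1510.00179 — 2 statements merged into one kernel-verified Lean document; each statement's English description precedes it below -/
import Mathlib

section
/- Let X have GPD(ξ, ψ) distribution with ξ ≠ 0, support (0, σ) where σ = ∞ if ξ > 0 and σ = ψ/|ξ| if ξ < 0. Let c = ψ/ξ and define Z = -1/(X + c) + 1/c. Then Z has GPD(-ξ, ξ²/ψ) distribution, i.e., P(Z > z) = (1 - ξz/(ξ²/ψ))^{1/ξ} on 0 < z < σ_z, where σ_z = ξ/ψ if ξ > 0 and σ_z = ∞ if ξ < 0. -/
open MeasureTheory Filter Topology Set

/-!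
With `c = ψ / ξ` the transformation is `x ↦ x / (c (x + c))`, which is increasing on the support
`(0, σ)` of `X` (there `c (x + c) > 0`), so `{Z > z} = {X > x₀}` with `x₀ = c² z / (1 - c z)`,
and the tail of `X` at `x₀` equals `(1 - c z)^(1/ξ)`. For `ξ < 0` the only subtlety is the
endpoint `X = σ = -c`, where the division by `X + c` yields a junk value: it is a null event
because the tail `(1 + ξ x / ψ)^(-1/ξ)` tends to `0` as `x → σ`.
-/

section Moebius

variable {c x z : ℝ}

theorem neg_one_div_add_add_one_div (hc : c ≠ 0) (hxc : x + c ≠ 0) :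
    -1 / (x + c) + 1 / c = x / (c * (x + c)) := by
  field_simp
  ring

theorem lt_neg_one_div_add_add_one_div_iff (hcx : 0 < c * (x + c)) (hcz : 0 < 1 - c * z) :
    z < -1 / (x + c) + 1 / c ↔ c ^ 2 * z / (1 - c * z) < x := by
  have hc : c ≠ 0 := left_ne_zero_of_mul hcx.ne'
  have hxc : x + c ≠ 0 := right_ne_zero_of_mul hcx.ne'
  rw [neg_one_div_add_add_one_div hc hxc, lt_div_iff₀ hcx, div_lt_iff₀ hcz]
  constructor <;> intro h <;> linarith

theorem one_add_div_div_eq_inv (hcz : 1 - c * z ≠ 0) :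
    1 + c ^ 2 * z / (1 - c * z) / c = (1 - c * z)⁻¹ := by
  field_simp
  ring

end Moebius

theorem measure_le_eq_zero_of_tendsto_measure_lt {Ω : Type*} [MeasurableSpace Ω] {μ : Measure Ω}
    {X : Ω → ℝ} {σ : ℝ} (h : Tendsto (fun x => μ {ω | X ω > x}) (𝓝[<] σ) (𝓝 0)) :
    μ {ω | σ ≤ X ω} = 0 :=
  nonpos_iff_eq_zero.mp <| ge_of_tendsto h <| eventually_nhdsWithin_of_forall fun _ hx =>
    measure_mono fun _ (hω : σ ≤ _) => (show _ < σ from hx).trans_le hω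

theorem tendsto_gpd_tail_nhdsLT_endpoint {ξ ψ : ℝ} (hξ : ξ < 0) (hψ : 0 < ψ) :
    Tendsto (fun x => ENNReal.ofReal ((1 + ξ * x / ψ) ^ (-1 / ξ))) (𝓝[<] (ψ / -ξ)) (𝓝 0) := by
  have hp : 0 < -1 / ξ := div_pos_of_neg_of_neg (by norm_num) hξ
  have hcont : ContinuousAt (fun x => ENNReal.ofReal ((1 + ξ * x / ψ) ^ (-1 / ξ))) (ψ / -ξ) :=
    ENNReal.continuous_ofReal.continuousAt.comp
      (ContinuousAt.rpow_const (by fun_prop) (Or.inr hp.le))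
  have hbase : 1 + ξ * (ψ / -ξ) / ψ = 0 := by field_simp [hξ.ne]; ring
  simpa [Function.comp_def, hbase, Real.zero_rpow hp.ne'] using
    hcont.tendsto.mono_left nhdsWithin_le_nhds

theorem ae_lt_gpd_endpoint {Ω : Type*} [MeasurableSpace Ω] {μ : Measure Ω} {X : Ω → ℝ}
    {ξ ψ : ℝ} (hξ : ξ < 0) (hψ : 0 < ψ)
    (htail : ∀ x : ℝ, 0 < x → x < ψ / -ξ →
      μ {ω | X ω > x} = ENNReal.ofReal ((1 + ξ * x / ψ) ^ (-1 / ξ))) :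
    ∀ᵐ ω ∂μ, X ω < ψ / -ξ := by
  have hσ : 0 < ψ / -ξ := div_pos hψ (neg_pos.mpr hξ)
  have hnull := measure_le_eq_zero_of_tendsto_measure_lt <|
    (tendsto_gpd_tail_nhdsLT_endpoint hξ hψ).congr' <|
      eventually_of_mem (Ioo_mem_nhdsLT hσ) fun x hx => (htail x hx.1 hx.2).symm
  simpa only [ae_iff, not_lt] using hnull

section Parameters

variable {ξ ψ x z : ℝ}

theorem gpd_support_mul_pos (hξ : ξ ≠ 0) (hψ : 0 < ψ) (hx : 0 < x) (hxσ : ξ < 0 → x < ψ / -ξ) :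
    0 < ψ / ξ * (x + ψ / ξ) := by
  rcases hξ.lt_or_gt with hneg | hpos
  · have hxc : x + ψ / ξ < 0 := by rw [div_neg] at hxσ; linarith [hxσ hneg]
    exact mul_pos_of_neg_of_neg (div_neg_of_pos_of_neg hψ hneg) hxc
  · have hc : 0 < ψ / ξ := div_pos hψ hpos
    positivity

theorem one_sub_gpd_shift_mul_pos (hξ : ξ ≠ 0) (hψ : 0 < ψ) (hz : 0 < z) (hzσ : 0 < ξ → z < ξ / ψ) :
    0 < 1 - ψ / ξ * z := by
  rcases hξ.lt_or_gt with hneg | hpos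
  · nlinarith [div_neg_of_pos_of_neg hψ hneg]
  · have : ψ / ξ * z < 1 := by
      calc ψ / ξ * z < ψ / ξ * (ξ / ψ) := mul_lt_mul_of_pos_left (hzσ hpos) (div_pos hψ hpos)
        _ = 1 := by field_simp
    linarith

end Parameters

theorem gpd_transform_sign_change_general {Ω : Type*} [MeasurableSpace Ω]
    (μ : Measure Ω) (X : Ω → ℝ)
    (ξ ψ : ℝ) (hξ : ξ ≠ 0) (hψ : 0 < ψ)
    (hpos : ∀ᵐ ω ∂μ, 0 < X ω)
    (htail : ∀ x : ℝ, 0 < x → (ξ < 0 → x < ψ / (-ξ)) →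
      μ {ω | X ω > x} = ENNReal.ofReal ((1 + ξ * x / ψ) ^ (-1/ξ))) :
    ∀ z : ℝ, 0 < z → (0 < ξ → z < ξ / ψ) →
      μ {ω | -1/(X ω + ψ/ξ) + 1/(ψ/ξ) > z}
        = ENNReal.ofReal ((1 - ξ * z / (ξ^2/ψ)) ^ (1/ξ)) := by
  intro z hz hzσ
  set c := ψ / ξ with hc
  have hcz : 0 < 1 - c * z := one_sub_gpd_shift_mul_pos hξ hψ hz hzσ
  have hlt : ∀ᵐ ω ∂μ, ξ < 0 → X ω < ψ / -ξ := eventually_imp_distrib_left.mpr fun hneg =>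
    ae_lt_gpd_endpoint hneg hψ fun x hx hxσ => htail x hx fun _ => hxσ
  have hx₀ : 0 < c ^ 2 * z / (1 - c * z) := by positivity
  have hx₀σ : ξ < 0 → c ^ 2 * z / (1 - c * z) < ψ / -ξ := fun hneg => by
    have hc0 : c < 0 := div_neg_of_pos_of_neg hψ hneg
    rw [div_neg, ← hc, div_lt_iff₀ hcz]
    nlinarith
  calc μ {ω | -1 / (X ω + c) + 1 / c > z} = μ {ω | X ω > c ^ 2 * z / (1 - c * z)} :=
        measure_congr <| eventuallyEq_set.mpr <| by
          filter_upwards [hpos, hlt] with ω hω hωσ using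
            lt_neg_one_div_add_add_one_div_iff (gpd_support_mul_pos hξ hψ hω hωσ) hcz
    _ = ENNReal.ofReal ((1 + ξ * (c ^ 2 * z / (1 - c * z)) / ψ) ^ (-1 / ξ)) := htail _ hx₀ hx₀σ
    _ = ENNReal.ofReal ((1 - ξ * z / (ξ ^ 2 / ψ)) ^ (1 / ξ)) := by
      have hrate : ξ * z / (ξ ^ 2 / ψ) = c * z := by rw [hc]; field_simp
      rw [mul_comm ξ, ← div_div_eq_mul_div, one_add_div_div_eq_inv hcz.ne', hrate,
        Real.inv_rpow hcz.le, ← Real.rpow_neg hcz.le, neg_div, neg_neg]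

/-- Theorem 9 (second part): if `X ~ GPD(ξ, ψ)` with `ξ ≠ 0` and
`c = ψ/ξ`, then `Z = -1/(X + c) + 1/c` has `GPD(-ξ, ξ²/ψ)` distribution:
`P(Z > z) = (1 - ξz/(ξ²/ψ))^(1/ξ)` for `0 < z < σ_z`, where `σ_z = ξ/ψ`
if `ξ > 0` and `σ_z = ∞` if `ξ < 0`. -/
theorem gpd_transform_sign_change {Ω : Type*} [MeasurableSpace Ω]
    (μ : Measure Ω) [IsProbabilityMeasure μ] (X : Ω → ℝ) (hX : Measurable X)
    (ξ ψ : ℝ) (hξ : ξ ≠ 0) (hψ : 0 < ψ)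
    (hpos : ∀ᵐ ω ∂μ, 0 < X ω)
    (htail : ∀ x : ℝ, 0 < x → (ξ < 0 → x < ψ / (-ξ)) →
      μ {ω | X ω > x} = ENNReal.ofReal ((1 + ξ * x / ψ) ^ (-1/ξ)))
    (htailEnd : ξ < 0 → ∀ x : ℝ, ψ / (-ξ) ≤ x → μ {ω | X ω > x} = 0) :
    ∀ z : ℝ, 0 < z → (0 < ξ → z < ξ / ψ) →
      μ {ω | -1/(X ω + ψ/ξ) + 1/(ψ/ξ) > z}
        = ENNReal.ofReal ((1 - ξ * z / (ξ^2/ψ)) ^ (1/ξ)) :=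
  gpd_transform_sign_change_general μ X ξ ψ hξ hψ hpos htail
end

section
/- Let ξ > 0, ψ > 0 and c = ψ/ξ. A random variable X has GPD(ξ, ψ) distribution if and only if Z = X/(c(X + c)) has GPD(-ξ, ξ²/ψ) distribution with support (0, ξ/ψ). -/
/-!
With `c = ψ/ξ`, the map `T x = x / (c (x + c)) = 1/c - 1/(x + c)` is an increasing bijection from
`(0, ∞)` onto `(0, 1/c)`, so `{Z > T x}` and `{X > x}` agree almost surely. Moreover
`1 - c T x = (1 + x/c)⁻¹`, which turns the GPD(-ξ, ξ²/ψ) tail `(1 - ψ z/ξ)^(1/ξ)` at `z = T x` into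
the GPD(ξ, ψ) tail `(1 + ξ x/ψ)^(-1/ξ)`.
-/

open MeasureTheory Set

noncomputable def gpdTransform (c x : ℝ) : ℝ := x / (c * (x + c))

section gpdTransform

variable {c x : ℝ}

lemma gpdTransform_strictMonoOn (hc : 0 < c) : StrictMonoOn (gpdTransform c) (Ioi (-c)) := by
  intro a ha b hb hab
  have ha' : 0 < a + c := by linarith [mem_Ioi.1 ha]
  have hb' : 0 < b + c := by linarith [mem_Ioi.1 hb]
  rw [gpdTransform, gpdTransform, div_lt_div_iff₀ (mul_pos hc ha') (mul_pos hc hb')]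
  nlinarith [mul_pos hc hc]

lemma one_sub_mul_gpdTransform (hc : c ≠ 0) (hx : x + c ≠ 0) :
    1 - c * gpdTransform c x = (1 + x / c)⁻¹ := by
  rw [gpdTransform, one_add_div hc, add_comm c x, inv_div]
  field_simp
  ring

lemma gpdTransform_lt_inv (hc : 0 < c) (hx : -c < x) : gpdTransform c x < c⁻¹ := by
  have hxc : 0 < x + c := by linarith
  have h := one_sub_mul_gpdTransform hc.ne' hxc.ne'
  have hpos : 0 < (1 + x / c)⁻¹ := inv_pos.2 (by rw [one_add_div hc.ne', add_comm]; positivity)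
  rw [← mul_one c⁻¹, lt_inv_mul_iff₀ hc]
  linarith

lemma gpdTransform_surjOn (hc : 0 < c) : SurjOn (gpdTransform c) (Ioi 0) (Ioo 0 c⁻¹) := by
  rintro z ⟨hz0, hz⟩
  rw [← mul_one c⁻¹, lt_inv_mul_iff₀ hc] at hz
  have hcz : 0 < 1 - c * z := by linarith
  refine ⟨c ^ 2 * z / (1 - c * z), mem_Ioi.2 (by positivity), ?_⟩
  rw [gpdTransform]
  field_simp
  ring

end gpdTransform

lemma measure_comp_gt_eq_of_strictMonoOn {Ω α β : Type*} [MeasurableSpace Ω] [LinearOrder α]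
    [Preorder β] {μ : Measure Ω} {X : Ω → α} {f : α → β} {s : Set α} (hf : StrictMonoOn f s)
    (hX : ∀ᵐ ω ∂μ, X ω ∈ s) {x : α} (hx : x ∈ s) :
    μ {ω | f (X ω) > f x} = μ {ω | X ω > x} := by
  apply measure_congr
  filter_upwards [hX] with ω hω
  exact propext (hf.lt_iff_lt hx hω)

lemma gpd_tail_gpdTransform {ξ ψ x : ℝ} (hξ : 0 < ξ) (hψ : 0 < ψ) (hx : 0 ≤ x) :
    (1 - ψ * gpdTransform (ψ / ξ) x / ξ) ^ (1 / ξ) = (1 + ξ * x / ψ) ^ (-1 / ξ) := by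
  have hc : 0 < ψ / ξ := div_pos hψ hξ
  have hbase : 0 ≤ 1 + x / (ψ / ξ) := by positivity
  rw [mul_div_right_comm, show ξ * x / ψ = x / (ψ / ξ) by field_simp,
    one_sub_mul_gpdTransform hc.ne' (by positivity), Real.inv_rpow hbase, ← Real.rpow_neg hbase,
    neg_div]

theorem gpd_iff_transformed_gpd_general {Ω : Type*} [MeasurableSpace Ω]
    (μ : Measure Ω) [IsProbabilityMeasure μ] (X : Ω → ℝ)
    (ξ ψ : ℝ) (hξ : 0 < ξ) (hψ : 0 < ψ)
    (hpos : ∀ᵐ ω ∂μ, 0 < X ω) :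
    (∀ x : ℝ, 0 < x →
        μ {ω | X ω > x} = ENNReal.ofReal ((1 + ξ * x / ψ) ^ (-1/ξ)))
      ↔ ((∀ z : ℝ, 0 < z → z < ξ/ψ →
            μ {ω | X ω / ((ψ/ξ) * (X ω + ψ/ξ)) > z}
              = ENNReal.ofReal ((1 - ψ * z / ξ) ^ (1/ξ))) ∧
          ∀ z : ℝ, ξ/ψ ≤ z →
            μ {ω | X ω / ((ψ/ξ) * (X ω + ψ/ξ)) ≥ z} = 0) := by
  have hc : 0 < ψ / ξ := div_pos hψ hξ
  have hinv : ξ / ψ = (ψ / ξ)⁻¹ := (inv_div ψ ξ).symm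
  have hmono : StrictMonoOn (gpdTransform (ψ / ξ)) (Ioi 0) :=
    (gpdTransform_strictMonoOn hc).mono (Ioi_subset_Ioi (neg_lt_zero.2 hc).le)
  have hZ (x : ℝ) (hx : 0 < x) : μ {ω | X ω / ((ψ/ξ) * (X ω + ψ/ξ)) > gpdTransform (ψ / ξ) x}
      = μ {ω | X ω > x} := measure_comp_gt_eq_of_strictMonoOn hmono hpos hx
  constructor
  · intro hXtail
    refine ⟨fun z hz0 hz => ?_, fun z hz => ?_⟩
    · obtain ⟨x, hx, rfl⟩ := gpdTransform_surjOn hc ⟨hz0, hinv ▸ hz⟩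
      rw [hZ x hx, hXtail x hx, gpd_tail_gpdTransform hξ hψ hx.le]
    · rw [measure_eq_zero_iff_ae_notMem]
      filter_upwards [hpos] with ω hω
      exact not_le.2 ((gpdTransform_lt_inv hc (by linarith)).trans_le (hinv ▸ hz))
  · rintro ⟨hZtail, -⟩ x hx
    have hx' : -(ψ / ξ) < x := by linarith
    rw [← hZ x hx, hZtail _ (by unfold gpdTransform; positivity)
      (hinv ▸ gpdTransform_lt_inv hc hx'), gpd_tail_gpdTransform hξ hψ hx.le]

/-- Corollary 10: let `ξ > 0`, `ψ > 0` and `c = ψ/ξ`.  A positive random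
variable `X` has GPD(ξ, ψ) distribution iff `Z = X/(c(X + c))` has
GPD(-ξ, ξ²/ψ) distribution, with support `(0, ξ/ψ)`:
`P(Z > z) = (1 - ψz/ξ)^(1/ξ)` for `0 < z < ξ/ψ` and `P(Z ≥ ξ/ψ) = 0`. -/
theorem gpd_iff_transformed_gpd {Ω : Type*} [MeasurableSpace Ω]
    (μ : Measure Ω) [IsProbabilityMeasure μ] (X : Ω → ℝ) (hX : Measurable X)
    (ξ ψ : ℝ) (hξ : 0 < ξ) (hψ : 0 < ψ)
    (hpos : ∀ᵐ ω ∂μ, 0 < X ω) :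
    (∀ x : ℝ, 0 < x →
        μ {ω | X ω > x} = ENNReal.ofReal ((1 + ξ * x / ψ) ^ (-1/ξ)))
      ↔ ((∀ z : ℝ, 0 < z → z < ξ/ψ →
            μ {ω | X ω / ((ψ/ξ) * (X ω + ψ/ξ)) > z}
              = ENNReal.ofReal ((1 - ψ * z / ξ) ^ (1/ξ))) ∧
          ∀ z : ℝ, ξ/ψ ≤ z →
            μ {ω | X ω / ((ψ/ξ) * (X ω + ψ/ξ)) ≥ z} = 0) :=
  gpd_iff_transformed_gpd_general μ X ξ ψ hξ hψ hpos
end
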